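/- For all n ≥ 0 and all rationals m, r^{(n+1)}(X) = (X + m + 1)·r^{(n)}(X) − f_m^{(n)}(X) as polynomials in ℚ[X]. -/
import Mathlib

open Polynomial

/-- h(i) = 0, -1, -1, 0, 1, 1 according as i = 0,1,2,3,4,5 (mod 6). -/
def hcoef (i : ℕ) : ℤ :=
  match i % 6 with
  | 0 => 0 | 1 => -1 | 2 => -1 | 3 => 0 | 4 => 1 | _ => 1

/-- g(i) = 1, -m, -m-1, -1, m, m+1 according as i = 0,1,2,3,4,5 (mod 6). -/
def gcoef (m : ℚ) (i : ℕ) : ℚ :=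
  match i % 6 with
  | 0 => 1 | 1 => -m | 2 => -m - 1 | 3 => -1 | 4 => m | _ => m + 1

/-- f_m^{(n)}(X) = sum_{i=0}^n C(n,i) X^i g(n-i). -/
noncomputable def fpol (m : ℚ) (n : ℕ) : ℚ[X] :=
  ∑ i ∈ Finset.range (n + 1), C ((n.choose i : ℚ) * gcoef m (n - i)) * X ^ i

/-- r^{(n)}(X) = sum_{i=0}^n C(n,i) X^i h(n-i). -/
noncomputable def rpol (n : ℕ) : ℤ[X] :=
  ∑ i ∈ Finset.range (n + 1), C ((n.choose i : ℤ) * hcoef (n - i)) * X ^ i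

lemma hkey (m : ℚ) (i : ℕ) : (hcoef (i+1) : ℚ) = (m+1) * hcoef i - gcoef m i := by
  have h6 : (i+1) % 6 = (i % 6 + 1) % 6 := by omega
  have : i % 6 = 0 ∨ i % 6 = 1 ∨ i % 6 = 2 ∨ i % 6 = 3 ∨ i % 6 = 4 ∨ i % 6 = 5 := by omega
  rcases this with h|h|h|h|h|h <;>
    · simp only [hcoef, gcoef, h6, h]
      push_cast
      ring

lemma coeff_rpol (n k : ℕ) :
    (rpol n).coeff k = if k ≤ n then (n.choose k : ℤ) * hcoef (n-k) else 0 := by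
  unfold rpol
  rw [Polynomial.finset_sum_coeff]
  simp only [Polynomial.coeff_C_mul, Polynomial.coeff_X_pow, mul_ite, mul_one, mul_zero]
  rw [Finset.sum_ite_eq (Finset.range (n+1)) k]
  simp [Finset.mem_range, Nat.lt_succ_iff]

lemma coeff_fpol (m : ℚ) (n k : ℕ) :
    (fpol m n).coeff k = if k ≤ n then (n.choose k : ℚ) * gcoef m (n-k) else 0 := by
  unfold fpol
  rw [Polynomial.finset_sum_coeff]
  simp only [Polynomial.coeff_C_mul, Polynomial.coeff_X_pow, mul_ite, mul_one, mul_zero]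
  rw [Finset.sum_ite_eq (Finset.range (n+1)) k]
  simp [Finset.mem_range, Nat.lt_succ_iff]

theorem stmt1 (n : ℕ) (m : ℚ) :
    (rpol (n + 1)).map (Int.castRingHom ℚ) =
      (X + C (m + 1)) * (rpol n).map (Int.castRingHom ℚ) - fpol m n := by
  ext k
  rw [coeff_sub, add_mul, coeff_add, coeff_map, coeff_C_mul, coeff_map, coeff_fpol, coeff_rpol]
  simp only [Int.coe_castRingHom]
  cases k with
  | zero =>
    rw [show ((X : ℚ[X]) * (rpol n).map (Int.castRingHom ℚ)).coeff 0 = 0 from by simp,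
       coeff_rpol]
    simp only [Nat.zero_le, if_true, Nat.sub_zero, Nat.choose_zero_right, Nat.cast_one, one_mul]
    rw [hkey m n]
    ring
  | succ k =>
    rw [coeff_X_mul, coeff_map, coeff_rpol, coeff_rpol]
    simp only [Int.coe_castRingHom]
    rcases lt_trichotomy k n with h | rfl | h
    · have h1 : k + 1 ≤ n + 1 := by omega
      have h2 : k ≤ n := by omega
      have h3 : k + 1 ≤ n := by omega
      simp only [h1, h2, h3, if_true]
      have e1 : n - k = (n - (k+1)) + 1 := by omega
      have e2 : n + 1 - (k + 1) = (n - (k+1)) + 1 := by omega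
      have e3 : (n+1).choose (k+1) = n.choose k + n.choose (k+1) := by
        rw [Nat.choose_succ_succ', Nat.add_comm]
      rw [e1, e2, e3]
      push_cast
      rw [hkey m (n - (k+1))]
      ring
    · rw [if_pos (by omega), if_pos (le_refl _), if_neg (by omega), if_neg (by omega)]
      have : k + 1 - (k + 1) = 0 := by omega
      have h0 : k - k = 0 := by omega
      rw [this, h0]
      simp [hcoef]
    · rw [if_neg (by omega), if_neg (by omega), if_neg (by omega), if_neg (by omega)]
      simp
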